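/- Fix l ≥ 2. For l-1 ≤ M < 2l-1 with N ≡ M mod 2, the weighted number of lattice paths from (0,0) to (M,N) subject to a left wall at x=0, a type-1 filter at x=l-1, and a type-2 filter at x=2l-1 equals Σ_{k=0}^{⌊(N-l+1)/(4l)⌋} F(M+4kl, N) + Σ_{k=0}^{⌊(N-2l)/(4l)⌋} F(M-4kl-4l, N), where F(m,n) = binom(n,(n-m)/2) - binom(n,(n-m)/2 - 1). -/
import Mathlib


open Finset

/-- The x-coordinate after the first `k` steps of a path encoded by `s : Fin N → Bool`
(`true` = step `(x,y) → (x+1,y+1)`, `false` = step `(x,y) → (x-1,y+1)`), starting at `x = 0`. -/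
def pathPos {N : ℕ} (s : Fin N → Bool) (k : ℕ) : ℤ :=
  ∑ i ∈ Finset.univ.filter (fun i : Fin N => (i : ℕ) < k), (if s i then (1 : ℤ) else -1)

/-- Binomial coefficient `binom n k` with integer lower argument, `0` out of range. -/
def ibinom (n : ℕ) (k : ℤ) : ℤ :=
  if 0 ≤ k then (n.choose k.toNat : ℤ) else 0


/-- The weight of a path: the product over its steps of the weight of each step. -/
def pathWeight {N : ℕ} (w : ℤ → Bool → ℤ) (s : Fin N → Bool) : ℤ :=
  ∏ i : Fin N, w (pathPos s i.val) (s i)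

/-- `F m n = binom n ((n-m)/2) - binom n ((n-m)/2 - 1)`. -/
def F (m : ℤ) (n : ℕ) : ℤ :=
  ibinom n (((n : ℤ) - m) / 2) - ibinom n (((n : ℤ) - m) / 2 - 1)

lemma ibinom_zero_of_neg {n : ℕ} {j : ℤ} (h : j < 0) : ibinom n j = 0 := by
  simp [ibinom, not_le.mpr h]

lemma ibinom_zero_of_gt {n : ℕ} {j : ℤ} (h : (n:ℤ) < j) : ibinom n j = 0 := by
  have h0 : (0:ℤ) ≤ j := by omega
  have : n < j.toNat := by omega
  simp [ibinom, h0, Nat.choose_eq_zero_of_lt this]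

lemma ibinom_pascal (n : ℕ) (j : ℤ) : ibinom (n+1) j = ibinom n j + ibinom n (j-1) := by
  rcases lt_or_ge j 0 with h | h
  · rw [ibinom_zero_of_neg h, ibinom_zero_of_neg h, ibinom_zero_of_neg (by omega)]
    ring
  rcases eq_or_lt_of_le h with h0 | h0
  · rw [← h0]
    simp [ibinom, ibinom_zero_of_neg (show (0:ℤ)-1 < 0 by omega)]
  · have h1 : (0:ℤ) ≤ j - 1 := by omega
    have hj : j.toNat = (j-1).toNat + 1 := by omega
    simp only [ibinom, if_pos h, if_pos h1, hj]
    rw [Nat.choose_succ_succ']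
    push_cast
    ring

lemma ibinom_symm (n : ℕ) (j : ℤ) : ibinom n j = ibinom n ((n:ℤ) - j) := by
  rcases lt_or_ge j 0 with h | h
  · rw [ibinom_zero_of_neg h, ibinom_zero_of_gt (show (n:ℤ) < n - j by omega)]
  rcases le_or_gt j (n:ℤ) with h2 | h2
  · have h3 : (0:ℤ) ≤ (n:ℤ) - j := by omega
    simp only [ibinom, if_pos h, if_pos h3]
    have : ((n:ℤ) - j).toNat = n - j.toNat := by omega
    rw [this, Nat.choose_symm (by omega)]
  · rw [ibinom_zero_of_gt h2, ibinom_zero_of_neg (show (n:ℤ) - j < 0 by omega)]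

lemma F_eq {m : ℤ} {n : ℕ} {j : ℤ} (h : (n:ℤ) - m = 2*j) :
    F m n = ibinom n j - ibinom n (j-1) := by
  have : ((n:ℤ) - m)/2 = j := by omega
  rw [F, this]

lemma F_reflect {m : ℤ} {n : ℕ} (h : 2 ∣ ((n:ℤ) - m)) : F (-m-2) n = - F m n := by
  obtain ⟨j, hj⟩ := h
  rw [F_eq (show (n:ℤ) - m = 2*j by omega), F_eq (show (n:ℤ) - (-m-2) = 2*(n - j + 1) by omega)]
  rw [show (n:ℤ) - j + 1 - 1 = n - j by ring]
  rw [show ibinom n ((n:ℤ) - j + 1) = ibinom n (j-1) from by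
    rw [ibinom_symm n (j-1)]; ring_nf]
  rw [show ibinom n ((n:ℤ) - j) = ibinom n j from (ibinom_symm n j).symm]
  ring

lemma F_pascal {m : ℤ} {n : ℕ} (h : 2 ∣ ((n:ℤ) + 1 - m)) :
    F m (n+1) = F (m-1) n + F (m+1) n := by
  obtain ⟨j, hj⟩ := h
  rw [F_eq (show ((n+1:ℕ):ℤ) - m = 2*j by push_cast; omega),
      F_eq (show (n:ℤ) - (m-1) = 2*j by omega),
      F_eq (show (n:ℤ) - (m+1) = 2*(j-1) by omega)]
  rw [ibinom_pascal, ibinom_pascal]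
  ring

lemma F_zero_of_gt {m : ℤ} {n : ℕ} (h : (n:ℤ) < m) : F m n = 0 := by
  have h1 : ((n:ℤ) - m)/2 < 0 := by omega
  rw [F, ibinom_zero_of_neg h1, ibinom_zero_of_neg (by omega)]
  ring

lemma F_zero_of_lt {m : ℤ} {n : ℕ} (h : m < -(n:ℤ) - 3) : F m n = 0 := by
  have h1 : (n:ℤ) < ((n:ℤ) - m)/2 - 1 := by omega
  rw [F, ibinom_zero_of_gt (by omega), ibinom_zero_of_gt h1]
  ring

lemma F_zero_of_lt' {m : ℤ} {n : ℕ} (hpar : 2 ∣ ((n:ℤ) - m)) (h : m < -(n:ℤ) - 2) :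
    F m n = 0 := by
  obtain ⟨j, hj⟩ := hpar
  rw [F_eq (show (n:ℤ) - m = 2*j by omega)]
  rw [ibinom_zero_of_gt (by omega), ibinom_zero_of_gt (by omega)]
  ring

lemma F_zero_zero : F 0 0 = 1 := by
  rw [F]; norm_num [ibinom]

noncomputable def SS (c x : ℤ) (n : ℕ) : ℤ := ∑ᶠ k : ℤ, F (x + c*k) n

lemma F_term_zero {c x : ℤ} {n : ℕ} (hc : 1 ≤ c) {k : ℤ}
    (hk : k ∉ Set.Icc (-(n:ℤ) - 4 - x.natAbs) ((n:ℤ) + 1 + x.natAbs)) : F (x + c*k) n = 0 := by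
  simp only [Set.mem_Icc, not_and_or, not_le] at hk
  have hx1 : -(x.natAbs : ℤ) ≤ x := by omega
  have hx2 : x ≤ (x.natAbs : ℤ) := by omega
  rcases hk with hk | hk
  · have hck : c * k ≤ k := by nlinarith
    exact F_zero_of_lt (by omega)
  · have hck : k ≤ c * k := by nlinarith
    exact F_zero_of_gt (by omega)

lemma SS_support {c x : ℤ} {n : ℕ} (hc : 1 ≤ c) :
    (Function.support fun k : ℤ => F (x + c*k) n).Finite := by
  apply (Set.finite_Icc (-(n:ℤ) - 4 - x.natAbs) ((n:ℤ) + 1 + x.natAbs)).subset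
  intro k hk
  by_contra hmem
  exact hk (F_term_zero hc hmem)

lemma SS_eq_sum {c x : ℤ} {n : ℕ} (hc : 1 ≤ c) {a b : ℤ}
    (ha : a ≤ -(n:ℤ) - 4 - x.natAbs) (hb : (n:ℤ) + 1 + x.natAbs ≤ b) :
    SS c x n = ∑ k ∈ Finset.Icc a b, F (x + c*k) n := by
  apply finsum_eq_sum_of_support_subset
  intro k hk
  simp only [Finset.coe_Icc, Set.mem_Icc]
  by_contra hmem
  refine hk (F_term_zero hc ?_)
  simp only [Set.mem_Icc, not_and_or, not_le] at hmem ⊢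
  omega

lemma SS_shift {c x : ℤ} {n : ℕ} : SS c (x + c) n = SS c x n := by
  have h := finsum_comp_equiv (Equiv.addRight (1:ℤ)) (f := fun k : ℤ => F (x + c*k) n)
  rw [SS, SS, ← h]
  apply finsum_congr
  intro k
  have he : ((Equiv.addRight (1:ℤ)) k) = k + 1 := rfl
  rw [he, show x + c + c * k = x + c * (k+1) by ring]

lemma SS_shift_sub {c x : ℤ} {n : ℕ} : SS c (x - c) n = SS c x n := by
  have := SS_shift (c := c) (x := x - c) (n := n)
  simpa using this.symm

lemma SS_reflect {c x : ℤ} {n : ℕ} (hc : 2 ∣ c) (hpar : 2 ∣ ((n:ℤ) - x)) :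
    SS c (-x-2) n = - SS c x n := by
  have e1 : SS c (-x-2) n = ∑ᶠ k : ℤ, F (-x - 2 + c * ((Equiv.neg ℤ) k)) n :=
    (finsum_comp_equiv (Equiv.neg ℤ)).symm
  rw [e1]
  have : ∀ k : ℤ, F (-x - 2 + c * ((Equiv.neg ℤ) k)) n = - F (x + c*k) n := by
    intro k
    have hm : (-(x + c*k) - 2) = -x - 2 + c * ((Equiv.neg ℤ) k) := by
      simp [Equiv.neg]; ring
    rw [← hm]
    exact F_reflect (by
      obtain ⟨d, hd⟩ := hc; obtain ⟨e, he⟩ := hpar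
      exact ⟨e - d*k, by rw [hd] at *; linear_combination he⟩)
  rw [finsum_congr this, finsum_neg_distrib]
  rfl

lemma SS_pascal {c x : ℤ} {n : ℕ} (hc2 : 2 ∣ c) (hc : 1 ≤ c) (hpar : 2 ∣ ((n:ℤ) + 1 - x)) :
    SS c x (n+1) = SS c (x-1) n + SS c (x+1) n := by
  have : ∀ k : ℤ, F (x + c*k) (n+1) = F (x - 1 + c*k) n + F (x + 1 + c*k) n := by
    intro k
    have := F_pascal (m := x + c*k) (n := n)
      (by
        obtain ⟨d, hd⟩ := hc2; obtain ⟨e, he⟩ := hpar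
        exact ⟨e - d*k, by rw [hd] at *; linear_combination he⟩)
    rw [show x + c*k - 1 = x - 1 + c*k by ring, show x + c*k + 1 = x + 1 + c*k by ring] at this
    exact this
  rw [SS, finsum_congr this, finsum_add_distrib (SS_support hc) (SS_support hc)]
  rfl

lemma sum_insert_top (g : ℤ → ℤ) {a b : ℤ} (h : a ≤ b + 1) :
    ∑ k ∈ Finset.Icc a (b+1), g k = ∑ k ∈ Finset.Icc a b, g k + g (b+1) := by
  have : Finset.Icc a (b+1) = insert (b+1) (Finset.Icc a b) := by
    ext k; simp; omega
  rw [this, Finset.sum_insert (by simp)]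
  ring

lemma sum_even_odd (g : ℤ → ℤ) (a : ℤ) (t : ℕ) :
    ∑ k ∈ Finset.Icc (2*a) (2*(a+t)+1), g k
      = ∑ j ∈ Finset.Icc a (a+t), g (2*j) + ∑ j ∈ Finset.Icc a (a+t), g (2*j+1) := by
  induction t with
  | zero =>
    simp only [Nat.cast_zero, add_zero, Finset.Icc_self, Finset.sum_singleton]
    rw [show 2*a+1 = (2*a)+1 by ring, sum_insert_top g (by omega), Finset.Icc_self,
      Finset.sum_singleton]
  | succ t ih =>
    have h1 : 2*(a+(t+1:ℕ))+1 = (2*(a+t)+1) + 1 + 1 := by push_cast; ring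
    have h2 : (a + ((t:ℕ)+1:ℕ) : ℤ) = (a+t) + 1 := by push_cast; ring
    rw [h1, h2]
    rw [sum_insert_top g (by omega), show 2*(a+(t:ℤ))+1+1 = (2*(a+(t:ℤ))+1)+1 by ring,
      sum_insert_top g (by omega), ih,
      sum_insert_top (fun j => g (2*j)) (by omega), sum_insert_top (fun j => g (2*j+1)) (by omega)]
    ring_nf

lemma SS_split {c x : ℤ} {n : ℕ} (hc : 1 ≤ c) :
    SS c x n = SS (2*c) x n + SS (2*c) (x+c) n := by
  set S : ℤ := (n:ℤ) + 4 + x.natAbs + c with hS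
  have hc' : (0:ℤ) ≤ c := by omega
  have hxc : (x+c).natAbs ≤ x.natAbs + c.natAbs := Int.natAbs_add_le x c
  have e0 : SS c x n = ∑ k ∈ Finset.Icc (2*(-(S+1))) (2*(-(S+1) + ((2*S+1:ℤ).toNat : ℤ))+1), F (x + c*k) n := by
    apply SS_eq_sum hc <;> omega
  have e1 : SS (2*c) x n = ∑ j ∈ Finset.Icc (-(S+1)) (-(S+1) + ((2*S+1:ℤ).toNat : ℤ)), F (x + 2*c*j) n := by
    apply SS_eq_sum (by omega) <;> omega
  have e2 : SS (2*c) (x+c) n = ∑ j ∈ Finset.Icc (-(S+1)) (-(S+1) + ((2*S+1:ℤ).toNat : ℤ)), F ((x+c) + 2*c*j) n := by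
    apply SS_eq_sum (by omega) <;> omega
  rw [e0, e1, e2, sum_even_odd (fun k => F (x + c*k) n) (-(S+1)) ((2*S+1:ℤ).toNat)]
  congr 1
  · apply Finset.sum_congr rfl; intro j _; ring_nf
  · apply Finset.sum_congr rfl; intro j _; ring_nf

-- zero lemmas
lemma SS_self_neg {c x : ℤ} {n : ℕ} (h : SS c x n = - SS c x n) : SS c x n = 0 := by omega

lemma SS_A_neg_one {l n : ℕ} (hpar : 2 ∣ ((n:ℤ) + 1)) : SS (2*l) (-1) n = 0 := by
  apply SS_self_neg
  have h := SS_reflect (c := 2*(l:ℤ)) (x := -1) (n := n) ⟨l, by ring⟩ (by omega)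
  rw [show -(-1:ℤ)-2 = -1 by ring] at h
  exact h

lemma SS_A_top {l : ℕ} {n : ℕ} (hpar : 2 ∣ ((n:ℤ) - ((l:ℤ)-1))) :
    SS (2*l) ((l:ℤ)-1) n = 0 := by
  apply SS_self_neg
  have h := SS_reflect (c := 2*(l:ℤ)) (x := (l:ℤ)-1) (n := n) ⟨l, by ring⟩ hpar
  rw [show (-((l:ℤ)-1)-2) = ((l:ℤ)-1) - 2*l by ring] at h
  rw [SS_shift_sub] at h
  exact h

lemma SS_B_top {l : ℕ} {n : ℕ} (hpar : 2 ∣ ((n:ℤ) - (2*(l:ℤ)-1))) :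
    SS (4*l) (2*(l:ℤ)-1) n = 0 := by
  apply SS_self_neg
  have h := SS_reflect (c := 4*(l:ℤ)) (x := 2*(l:ℤ)-1) (n := n) ⟨2*l, by ring⟩ hpar
  rw [show (-(2*(l:ℤ)-1)-2) = (2*(l:ℤ)-1) - 4*l by ring] at h
  rw [SS_shift_sub] at h
  exact h

lemma SS_B_refl {l : ℕ} {n : ℕ} (hpar : 2 ∣ ((n:ℤ) - (l:ℤ))) :
    SS (4*l) (3*(l:ℤ)-2) n = - SS (4*l) ((l:ℤ)) n := by
  have h := SS_reflect (c := 4*(l:ℤ)) (x := (l:ℤ)) (n := n) ⟨2*l, by ring⟩ hpar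
  rw [show (-(l:ℤ)-2) = (3*(l:ℤ)-2) - 4*l by ring] at h
  rw [SS_shift_sub] at h
  exact h

lemma SS_splitA {l : ℕ} (hl : 1 ≤ l) (x : ℤ) (n : ℕ) :
    SS (2*l) x n = SS (4*l) x n + SS (4*l) (x + 2*l) n := by
  have h := SS_split (c := 2*(l:ℤ)) (x := x) (n := n) (by omega)
  rw [show (2*(2*(l:ℤ))) = 4*l by ring] at h
  exact h

lemma SS_base {c M : ℤ} (hc4 : 4 ≤ c) (h0 : 0 ≤ M) (hle : M ≤ c - 4) (hpar : 2 ∣ M) :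
    SS c M 0 = if M = 0 then 1 else 0 := by
  have key : ∀ k : ℤ, k ≠ 0 → F (M + c*k) 0 = 0 := by
    intro k hk
    rcases lt_or_gt_of_ne hk with hneg | hpos
    · have h1 : c * k ≤ c * (-1) := by
        apply mul_le_mul_of_nonneg_left (by omega) (by omega)
      apply F_zero_of_lt; push_cast; omega
    · have h1 : c * 1 ≤ c * k := by
        apply mul_le_mul_of_nonneg_left (by omega) (by omega)
      apply F_zero_of_gt; push_cast; omega
  by_cases hM : M = 0
  · subst hM
    rw [if_pos rfl, SS, finsum_eq_single _ (0 : ℤ) (fun k hk => by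
      rw [show (0:ℤ) + c*k = 0 + c*k from rfl]; simpa using key k hk)]
    simpa using F_zero_zero
  · rw [if_neg hM, SS]
    apply finsum_eq_zero_of_forall_eq_zero
    intro k
    by_cases hk : k = 0
    · subst hk; simp only [mul_zero, add_zero]
      apply F_zero_of_gt; push_cast; omega
    · exact key k hk

-- the transfer matrix count
def wcoefA (l : ℕ) (y : ℤ) : ℤ := if y = 2*(l:ℤ) - 1 then 2 else 1
def wcoefB (l : ℕ) (y : ℤ) : ℤ :=
  if y = 0 ∨ y = (l:ℤ) - 1 ∨ y = 2*(l:ℤ) - 1 then 0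
  else if y = (l:ℤ) ∨ y = 2*(l:ℤ) then 2 else 1

def cnt (l : ℕ) : ℕ → ℤ → ℤ
  | 0, M => if M = 0 then 1 else 0
  | n+1, M => wcoefA l (M-1) * cnt l n (M-1) + wcoefB l (M+1) * cnt l n (M+1)

lemma cnt_neg (l : ℕ) : ∀ (n : ℕ) (M : ℤ), M < 0 → cnt l n M = 0 := by
  intro n
  induction n with
  | zero => intro M hM; simp [cnt]; omega
  | succ n ih =>
    intro M hM
    rw [cnt, ih (M-1) (by omega)]
    by_cases h : M + 1 = 0
    · rw [h, show wcoefB l 0 = 0 from by simp [wcoefB]]; ring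
    · rw [ih (M+1) (by omega)]; ring

lemma cnt_eq_SS (l : ℕ) (hl : 2 ≤ l) : ∀ (n : ℕ) (M : ℤ),
    (0 ≤ M → M ≤ (l:ℤ) - 2 → 2 ∣ ((n:ℤ) - M) → cnt l n M = SS (2*l) M n) ∧
    ((l:ℤ) - 1 ≤ M → M ≤ 2*(l:ℤ) - 2 → 2 ∣ ((n:ℤ) - M) → cnt l n M = SS (4*l) M n) := by
  intro n
  induction n with
  | zero =>
    intro M
    constructor
    · intro h0 h1 hpar
      rw [show cnt l 0 M = if M = 0 then 1 else 0 from rfl,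
        SS_base (by omega) h0 (by omega) (by simpa using hpar)]
    · intro h0 h1 hpar
      rw [show cnt l 0 M = if M = 0 then 1 else 0 from rfl,
        SS_base (show (4:ℤ) ≤ 4*l by omega) (by omega) (by omega) (by simpa using hpar)]
  | succ n ih =>
    intro M
    have hpush : ((n+1:ℕ):ℤ) = (n:ℤ) + 1 := by push_cast; ring
    constructor
    · -- region A
      intro h0 h1 hpar
      rw [hpush] at hpar
      rw [cnt]
      have pascal := SS_pascal (c := 2*(l:ℤ)) (x := M) (n := n) ⟨l, by ring⟩ (by omega) (by omega)
      rw [pascal]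
      by_cases hM0 : M = 0
      · subst hM0
        rw [cnt_neg l n ((0:ℤ)-1) (by omega), show wcoefB l (0+1) = if l = 2 then 0 else 1 from ?_]
        · rw [show SS (2*(l:ℤ)) (0-1) n = 0 from by rw [show (0:ℤ)-1 = -1 by ring]; exact SS_A_neg_one (by omega)]
          by_cases hl2 : l = 2
          · rw [if_pos hl2]
            have : SS (2*(l:ℤ)) (0+1) n = 0 := by
              rw [show (0:ℤ)+1 = (l:ℤ)-1 by omega]
              exact SS_A_top (by omega)
            rw [this]; ring
          · rw [if_neg hl2]
            have hA := (ih (0+1)).1 (by omega) (by omega) (by omega)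
            rw [hA]; ring
        · by_cases hl2 : l = 2
          · subst hl2; norm_num [wcoefB]
          · rw [if_neg hl2, wcoefB,
              if_neg (show ¬((0:ℤ)+1 = 0 ∨ (0:ℤ)+1 = (l:ℤ)-1 ∨ (0:ℤ)+1 = 2*(l:ℤ)-1) by omega),
              if_neg (show ¬((0:ℤ)+1 = (l:ℤ) ∨ (0:ℤ)+1 = 2*(l:ℤ)) by omega)]
      · by_cases hMt : M = (l:ℤ) - 2
        · -- top of region A
          rw [show wcoefB l (M+1) = 0 from by
              rw [wcoefB, if_pos (show (M+1 = 0 ∨ M+1 = (l:ℤ)-1 ∨ M+1 = 2*(l:ℤ)-1) by omega)],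
            show wcoefA l (M-1) = 1 from by
              rw [wcoefA, if_neg (show ¬(M-1 = 2*(l:ℤ)-1) by omega)]]
          have hA := (ih (M-1)).1 (by omega) (by omega) (by omega)
          rw [hA, show M + 1 = (l:ℤ) - 1 by omega, SS_A_top (by omega)]
          ring
        · -- interior of region A
          rw [show wcoefB l (M+1) = 1 from by
              rw [wcoefB, if_neg (show ¬(M+1 = 0 ∨ M+1 = (l:ℤ)-1 ∨ M+1 = 2*(l:ℤ)-1) by omega),
                if_neg (show ¬(M+1 = (l:ℤ) ∨ M+1 = 2*(l:ℤ)) by omega)],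
            show wcoefA l (M-1) = 1 from by
              rw [wcoefA, if_neg (show ¬(M-1 = 2*(l:ℤ)-1) by omega)]]
          have hA1 := (ih (M-1)).1 (by omega) (by omega) (by omega)
          have hA2 := (ih (M+1)).1 (by omega) (by omega) (by omega)
          rw [hA1, hA2]; ring
    · -- strip
      intro h0 h1 hpar
      rw [hpush] at hpar
      rw [cnt]
      have pascal := SS_pascal (c := 4*(l:ℤ)) (x := M) (n := n) ⟨2*l, by ring⟩ (by omega) (by omega)
      rw [pascal]
      by_cases hM0 : M = (l:ℤ) - 1
      · -- bottom of strip
        subst hM0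
        rw [show wcoefA l ((l:ℤ)-1-1) = 1 from by
            rw [wcoefA, if_neg (show ¬((l:ℤ)-1-1 = 2*(l:ℤ)-1) by omega)],
          show wcoefB l ((l:ℤ)-1+1) = 2 from by
            rw [wcoefB,
              if_neg (show ¬((l:ℤ)-1+1 = 0 ∨ (l:ℤ)-1+1 = (l:ℤ)-1 ∨ (l:ℤ)-1+1 = 2*(l:ℤ)-1) by omega),
              if_pos (show ((l:ℤ)-1+1 = (l:ℤ) ∨ (l:ℤ)-1+1 = 2*(l:ℤ)) by omega)]]
        have hA := (ih ((l:ℤ)-1-1)).1 (by omega) (by omega) (by omega)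
        have hB := (ih ((l:ℤ)-1+1)).2 (by omega) (by omega) (by omega)
        rw [hA, hB]
        have hsplit := SS_splitA (l := l) (by omega) ((l:ℤ)-2) n
        have hrefl := SS_B_refl (l := l) (n := n) (by omega)
        rw [show (l:ℤ)-1-1 = (l:ℤ)-2 by ring, show (l:ℤ)-1+1 = (l:ℤ) by ring] at *
        rw [hsplit, show (l:ℤ)-2+2*l = 3*(l:ℤ)-2 by ring, hrefl]
        ring
      · by_cases hMt : M = 2*(l:ℤ) - 2
        · -- top of strip
          rw [show wcoefB l (M+1) = 0 from by
              rw [wcoefB, if_pos (show (M+1 = 0 ∨ M+1 = (l:ℤ)-1 ∨ M+1 = 2*(l:ℤ)-1) by omega)],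
            show wcoefA l (M-1) = 1 from by
              rw [wcoefA, if_neg (show ¬(M-1 = 2*(l:ℤ)-1) by omega)]]
          have hB := (ih (M-1)).2 (by omega) (by omega) (by omega)
          rw [hB, show M + 1 = 2*(l:ℤ) - 1 by omega, SS_B_top (by omega)]
          ring
        · -- interior of strip
          rw [show wcoefB l (M+1) = 1 from by
              rw [wcoefB, if_neg (show ¬(M+1 = 0 ∨ M+1 = (l:ℤ)-1 ∨ M+1 = 2*(l:ℤ)-1) by omega),
                if_neg (show ¬(M+1 = (l:ℤ) ∨ M+1 = 2*(l:ℤ)) by omega)],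
            show wcoefA l (M-1) = 1 from by
              rw [wcoefA, if_neg (show ¬(M-1 = 2*(l:ℤ)-1) by omega)]]
          have hB1 := (ih (M-1)).2 (by omega) (by omega) (by omega)
          have hB2 := (ih (M+1)).2 (by omega) (by omega) (by omega)
          rw [hB1, hB2]; ring

lemma SS_trunc (l : ℕ) (hl : 2 ≤ l) (M N : ℕ) (hM1 : (l:ℤ) - 1 ≤ (M:ℤ)) (hM2 : (M:ℤ) ≤ 2*(l:ℤ) - 2)
    (hpar : 2 ∣ ((N:ℤ) - M)) :
    SS (4*l) (M:ℤ) N =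
      (∑ k ∈ Finset.Icc (0 : ℤ) (Int.fdiv ((N : ℤ) - l + 1) (4 * l)), F ((M : ℤ) + 4 * k * l) N) +
      ∑ k ∈ Finset.Icc (0 : ℤ) (Int.fdiv ((N : ℤ) - 2 * l) (4 * l)), F ((M : ℤ) - 4 * k * l - 4 * l) N := by
  have hl4 : (0:ℤ) < 4*l := by omega
  obtain ⟨K1, hK1def⟩ : ∃ k, Int.fdiv ((N : ℤ) - l + 1) (4 * l) = k := ⟨_, rfl⟩
  obtain ⟨K2, hK2def⟩ : ∃ k, Int.fdiv ((N : ℤ) - 2 * l) (4 * l) = k := ⟨_, rfl⟩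
  rw [hK1def, hK2def]
  have hK1e : K1 = ((N : ℤ) - l + 1) / (4 * l) := by
    rw [← hK1def]; exact Int.fdiv_eq_ediv_of_nonneg _ (by omega)
  have hK2e : K2 = ((N : ℤ) - 2 * l) / (4 * l) := by
    rw [← hK2def]; exact Int.fdiv_eq_ediv_of_nonneg _ (by omega)
  have hK1a : 4*(l:ℤ)*K1 ≤ (N:ℤ) - l + 1 := by
    rw [hK1e]
    have h := Int.ediv_mul_le ((N:ℤ) - l + 1) (show (4*(l:ℤ)) ≠ 0 by omega)
    have hc := mul_comm (((N:ℤ) - l + 1) / (4*(l:ℤ))) (4*(l:ℤ))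
    omega
  have hK1b : (N:ℤ) - l + 1 < (K1 + 1) * (4*l) := by
    rw [hK1e]; exact Int.lt_ediv_add_one_mul_self _ hl4
  have hK2a : 4*(l:ℤ)*K2 ≤ (N:ℤ) - 2*l := by
    rw [hK2e]
    have h := Int.ediv_mul_le ((N:ℤ) - 2*l) (show (4*(l:ℤ)) ≠ 0 by omega)
    have hc := mul_comm (((N:ℤ) - 2*l) / (4*(l:ℤ))) (4*(l:ℤ))
    omega
  have hK2b : (N:ℤ) - 2*l < (K2 + 1) * (4*l) := by
    rw [hK2e]; exact Int.lt_ediv_add_one_mul_self _ hl4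
  obtain ⟨T, hTdef⟩ : ∃ t : ℤ, t = (N:ℤ) + (M:ℤ) + 5 := ⟨_, rfl⟩
  have habs : ((M:ℤ).natAbs : ℤ) = (M:ℤ) := by omega
  have e0 : SS (4*l) (M:ℤ) N = ∑ k ∈ Finset.Icc (-T) T, F ((M:ℤ) + 4*l*k) N := by
    apply SS_eq_sum (by omega) <;> omega
  have hsplitset : Finset.Icc (-T) T = Finset.Icc (-T) (-1) ∪ Finset.Icc 0 T := by
    ext k; simp; omega
  have hdisj : Disjoint (Finset.Icc (-T) (-1)) (Finset.Icc (0:ℤ) T) := by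
    rw [Finset.disjoint_left]; intro a ha hb; simp at ha hb; omega
  rw [e0, hsplitset, Finset.sum_union hdisj]
  have hsub1 : Finset.Icc (0:ℤ) K1 ⊆ Finset.Icc (0:ℤ) T := by
    intro k hk
    simp only [Finset.mem_Icc] at hk ⊢
    have h8 : 8*k ≤ 4*(l:ℤ)*k := mul_le_mul_of_nonneg_right (by omega) hk.1
    have h9 : 4*(l:ℤ)*k ≤ 4*(l:ℤ)*K1 := mul_le_mul_of_nonneg_left hk.2 (by omega)
    omega
  have hvan1 : ∀ k ∈ Finset.Icc (0:ℤ) T, k ∉ Finset.Icc (0:ℤ) K1 → F ((M:ℤ) + 4*l*k) N = 0 := by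
    intro k hk hk2
    simp only [Finset.mem_Icc] at hk hk2
    have hkK : K1 + 1 ≤ k := by omega
    have h1 : 4*(l:ℤ)*(K1+1) ≤ 4*(l:ℤ)*k := mul_le_mul_of_nonneg_left hkK (by omega)
    have hb' : (N:ℤ) - l + 1 < 4*(l:ℤ)*(K1+1) := by
      have hc := mul_comm (K1+1) (4*(l:ℤ)); omega
    apply F_zero_of_gt
    omega
  have hpos : ∑ k ∈ Finset.Icc (0:ℤ) T, F ((M:ℤ) + 4*l*k) N
      = ∑ k ∈ Finset.Icc (0:ℤ) K1, F ((M : ℤ) + 4 * k * l) N := by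
    rw [← Finset.sum_subset hsub1 hvan1]
    exact Finset.sum_congr rfl (fun k _ => by rw [show (M:ℤ) + 4*l*k = (M:ℤ) + 4*k*l by ring])
  have hneg : ∑ k ∈ Finset.Icc (-T) (-1), F ((M:ℤ) + 4*l*k) N
      = ∑ k ∈ Finset.Icc (0:ℤ) K2, F ((M : ℤ) - 4 * k * l - 4 * l) N := by
    have e1 : ∑ k ∈ Finset.Icc (-T) (-1), F ((M:ℤ) + 4*l*k) N
        = ∑ j ∈ Finset.Icc (0:ℤ) (T-1), F ((M:ℤ) - 4*l - 4*l*j) N := by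
      apply Finset.sum_nbij' (fun k => -1-k) (fun j => -1-j)
      · intro a ha; simp only [Finset.mem_Icc] at ha ⊢; omega
      · intro a ha; simp only [Finset.mem_Icc] at ha ⊢; omega
      · intro a _; omega
      · intro a _; omega
      · intro a _
        rw [show (M:ℤ) - 4*l - 4*l*(-1-a) = (M:ℤ) + 4*l*a by ring]
    have hsub2 : Finset.Icc (0:ℤ) K2 ⊆ Finset.Icc (0:ℤ) (T-1) := by
      intro k hk
      simp only [Finset.mem_Icc] at hk ⊢
      have h8 : 8*k ≤ 4*(l:ℤ)*k := mul_le_mul_of_nonneg_right (by omega) hk.1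
      have h9 : 4*(l:ℤ)*k ≤ 4*(l:ℤ)*K2 := mul_le_mul_of_nonneg_left hk.2 (by omega)
      omega
    have hvan2 : ∀ k ∈ Finset.Icc (0:ℤ) (T-1), k ∉ Finset.Icc (0:ℤ) K2 →
        F ((M:ℤ) - 4*l - 4*l*k) N = 0 := by
      intro k hk hk2
      simp only [Finset.mem_Icc] at hk hk2
      have hkK : K2 + 1 ≤ k := by omega
      have h1 : 4*(l:ℤ)*(K2+1) ≤ 4*(l:ℤ)*k := mul_le_mul_of_nonneg_left hkK (by omega)
      have hb' : (N:ℤ) - 2*l < 4*(l:ℤ)*(K2+1) := by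
        have hc := mul_comm (K2+1) (4*(l:ℤ)); omega
      apply F_zero_of_lt' (by
        obtain ⟨e, he⟩ := hpar
        exact ⟨e + 2*l + 2*l*k, by linear_combination he⟩)
      omega
    rw [e1, ← Finset.sum_subset hsub2 hvan2]
    exact Finset.sum_congr rfl (fun k _ => by
      rw [show (M:ℤ) - 4*l - 4*l*k = (M:ℤ) - 4*k*l - 4*l by ring])
  rw [hpos, hneg]
  ring

def wfun (l : ℕ) : ℤ → Bool → ℤ := fun x b =>
  if (x = (l : ℤ) ∧ b = false) ∨ (x = 2 * (l : ℤ) - 1 ∧ b = true) ∨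
      (x = 2 * (l : ℤ) ∧ b = false) then 2 else 1

lemma wfun_true (l : ℕ) (x : ℤ) : wfun l x true = wcoefA l x := by
  simp [wfun, wcoefA]

lemma wfun_false (l : ℕ) (x : ℤ) : wfun l x false = if x = (l:ℤ) ∨ x = 2*(l:ℤ) then 2 else 1 := by
  simp [wfun]

def snocE (n : ℕ) : ((Fin n → Bool) × Bool) ≃ (Fin (n+1) → Bool) where
  toFun p := Fin.snoc p.1 p.2
  invFun s := (fun i => s i.castSucc, s (Fin.last n))
  left_inv p := by
    obtain ⟨p1, b⟩ := p
    refine Prod.ext ?_ ?_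
    · show (fun i : Fin n => (Fin.snoc p1 b : Fin (n+1) → Bool) i.castSucc) = p1
      funext i
      exact Fin.snoc_castSucc _ _ _
    · show (Fin.snoc p1 b : Fin (n+1) → Bool) (Fin.last n) = b
      exact Fin.snoc_last _ _
  right_inv s := by
    funext i
    refine Fin.lastCases ?_ (fun j => ?_) i
    · exact Fin.snoc_last _ _
    · exact Fin.snoc_castSucc _ _ _

lemma pathPos_snoc {n : ℕ} (p : Fin n → Bool) (b : Bool) (k : ℕ) (hk : k ≤ n) :
    pathPos (Fin.snoc p b) k = pathPos p k := by
  classical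
  rw [pathPos, pathPos, Finset.sum_filter, Finset.sum_filter, Fin.sum_univ_castSucc]
  have hlast : ¬ ((Fin.last n : ℕ) < k) := by simp [Fin.last]; omega
  simp only [Fin.snoc_castSucc, Fin.coe_castSucc, if_neg hlast, add_zero]

lemma pathPos_snoc_last {n : ℕ} (p : Fin n → Bool) (b : Bool) :
    pathPos (Fin.snoc p b) (n+1) = pathPos p n + (if b then 1 else -1) := by
  classical
  rw [pathPos, pathPos, Finset.sum_filter, Finset.sum_filter, Fin.sum_univ_castSucc]
  simp only [Fin.snoc_castSucc, Fin.coe_castSucc, Fin.snoc_last, Fin.val_last]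
  rw [if_pos (by omega)]
  congr 1
  apply Finset.sum_congr rfl
  intro i _
  rw [if_pos (by omega : (i:ℕ) < n + 1), if_pos i.isLt]

lemma pathPos_snoc_last_true {n : ℕ} (p : Fin n → Bool) :
    pathPos (Fin.snoc p true) (n+1) = pathPos p n + 1 := by
  rw [pathPos_snoc_last]; norm_num

lemma pathPos_snoc_last_false {n : ℕ} (p : Fin n → Bool) :
    pathPos (Fin.snoc p false) (n+1) = pathPos p n - 1 := by
  rw [pathPos_snoc_last]; norm_num; ring

lemma pathWeight_snoc {n : ℕ} (w : ℤ → Bool → ℤ) (p : Fin n → Bool) (b : Bool) :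
    pathWeight w (Fin.snoc p b) = pathWeight w p * w (pathPos p n) b := by
  rw [pathWeight, pathWeight, Fin.prod_univ_castSucc]
  congr 1
  · apply Finset.prod_congr rfl
    intro i _
    rw [Fin.snoc_castSucc]
    congr 1
    rw [Fin.coe_castSucc, pathPos_snoc p b i.val (by omega)]
  · rw [Fin.snoc_last, Fin.val_last, pathPos_snoc p b n (le_refl n)]

lemma forall_snoc {n : ℕ} (p : Fin n → Bool) (b : Bool) (v : ℤ) :
    (∀ i : Fin (n+1), pathPos (Fin.snoc p b) i.val = v → (Fin.snoc p b : Fin (n+1) → Bool) i = true) ↔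
      ((∀ i : Fin n, pathPos p i.val = v → p i = true) ∧ (pathPos p n = v → b = true)) := by
  constructor
  · intro h
    constructor
    · intro i hi
      have := h i.castSucc (by
        rw [Fin.coe_castSucc, pathPos_snoc p b i.val (by omega)]; exact hi)
      rwa [Fin.snoc_castSucc] at this
    · intro hv
      have := h (Fin.last n) (by
        rw [Fin.val_last, pathPos_snoc p b n (le_refl n)]; exact hv)
      rwa [Fin.snoc_last] at this
  · rintro ⟨h1, h2⟩ i
    refine Fin.lastCases ?_ (fun j => ?_) i
    · rw [Fin.val_last, pathPos_snoc p b n (le_refl n), Fin.snoc_last]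
      exact h2
    · rw [Fin.coe_castSucc, pathPos_snoc p b j.val (by omega), Fin.snoc_castSucc]
      exact h1 j

def Cond (l : ℕ) {N : ℕ} (M : ℤ) (s : Fin N → Bool) : Prop :=
  pathPos s N = M ∧
  (∀ i : Fin N, pathPos s i.val = 0 → s i = true) ∧
  (∀ i : Fin N, pathPos s i.val = (l : ℤ) - 1 → s i = true) ∧
  (∀ i : Fin N, pathPos s i.val = 2 * (l : ℤ) - 1 → s i = true)

open Classical in
lemma count_eq (l : ℕ) : ∀ (N : ℕ) (M : ℤ),
    (∑ s : Fin N → Bool, if Cond l M s then pathWeight (wfun l) s else 0) = cnt l N M := by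
  intro N
  induction N with
  | zero =>
    intro M
    have hpp : ∀ s : Fin 0 → Bool, pathPos s 0 = 0 := by
      intro s; rw [pathPos]; simp
    by_cases hM : M = (0:ℤ)
    · subst hM
      rw [show cnt l 0 0 = 1 from rfl]
      have hcond : ∀ s : Fin 0 → Bool, Cond l 0 s := by
        intro s
        refine ⟨hpp s, fun i => i.elim0, fun i => i.elim0, fun i => i.elim0⟩
      haveI : Unique (Fin 0 → Bool) := ⟨⟨fun i => i.elim0⟩, fun s => funext fun i => i.elim0⟩
      rw [Fintype.sum_unique, if_pos (hcond _), pathWeight]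
      simp
    · rw [show cnt l 0 M = if M = 0 then 1 else 0 from rfl, if_neg hM]
      apply Finset.sum_eq_zero
      intro s _
      rw [if_neg (by
        intro hc
        exact hM ((hpp s ▸ hc.1).symm))]
  | succ n ih =>
    intro M
    rw [show cnt l (n+1) M = wcoefA l (M-1) * cnt l n (M-1) + wcoefB l (M+1) * cnt l n (M+1)
      from rfl]
    rw [← Fintype.sum_equiv (snocE n)
      (fun q => if Cond l M (snocE n q) then pathWeight (wfun l) (snocE n q) else 0)
      (fun s => if Cond l M s then pathWeight (wfun l) s else 0) (fun q => rfl)]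
    rw [Fintype.sum_prod_type]
    have hsum : ∀ p : Fin n → Bool,
        (∑ b : Bool, if Cond l M (snocE n (p, b)) then pathWeight (wfun l) (snocE n (p, b)) else 0)
        = (if Cond l (M-1) p then pathWeight (wfun l) p else 0) * wcoefA l (M-1)
          + (if Cond l (M+1) p then pathWeight (wfun l) p else 0) *
              (if (M+1 = 0 ∨ M+1 = (l:ℤ)-1 ∨ M+1 = 2*(l:ℤ)-1) then 0
               else if M+1 = (l:ℤ) ∨ M+1 = 2*(l:ℤ) then 2 else 1) := by
      intro p
      rw [Fintype.sum_bool]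
      congr 1
      · -- b = true
        have hiff : Cond l M (snocE n (p, true)) ↔ Cond l (M-1) p := by
          show Cond l M (Fin.snoc p true) ↔ _
          unfold Cond
          rw [pathPos_snoc_last_true, forall_snoc, forall_snoc, forall_snoc]
          constructor
          · rintro ⟨he, h1, h2, h3⟩
            exact ⟨by omega, h1.1, h2.1, h3.1⟩
          · rintro ⟨he, h1, h2, h3⟩
            exact ⟨by omega, ⟨h1, fun _ => rfl⟩, ⟨h2, fun _ => rfl⟩, ⟨h3, fun _ => rfl⟩⟩
        by_cases h : Cond l (M-1) p
        · rw [if_pos (hiff.mpr h), if_pos h]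
          show pathWeight (wfun l) (Fin.snoc p true) = _
          rw [pathWeight_snoc, h.1, wfun_true]
        · rw [if_neg (fun hc => h (hiff.mp hc)), if_neg h, zero_mul]
      · -- b = false
        by_cases hforb : (M+1 = 0 ∨ M+1 = (l:ℤ)-1 ∨ M+1 = 2*(l:ℤ)-1)
        · rw [if_pos hforb, mul_zero]
          rw [if_neg]
          intro hc
          obtain ⟨he, h1, h2, h3⟩ := hc
          rw [show snocE n (p, false) = Fin.snoc p false from rfl] at he h1 h2 h3
          rw [show Fin.snoc p false = (Fin.snoc p false : Fin (n+1) → Bool) from rfl,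
            pathPos_snoc_last_false] at he
          have hpn : pathPos p n = M + 1 := by omega
          rw [forall_snoc] at h1 h2 h3
          rcases hforb with hf | hf | hf
          · exact absurd (h1.2 (by omega)) (by simp)
          · exact absurd (h2.2 (by omega)) (by simp)
          · exact absurd (h3.2 (by omega)) (by simp)
        · rw [if_neg hforb]
          have hiff : Cond l M (snocE n (p, false)) ↔ Cond l (M+1) p := by
            show Cond l M (Fin.snoc p false) ↔ _
            unfold Cond
            rw [pathPos_snoc_last_false, forall_snoc, forall_snoc, forall_snoc]
            constructor
            · rintro ⟨he, h1, h2, h3⟩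
              exact ⟨by omega, h1.1, h2.1, h3.1⟩
            · rintro ⟨he, h1, h2, h3⟩
              refine ⟨by omega, ⟨h1, fun hv => absurd hv (by omega)⟩,
                ⟨h2, fun hv => absurd hv (by omega)⟩, ⟨h3, fun hv => absurd hv (by omega)⟩⟩
          by_cases h : Cond l (M+1) p
          · rw [if_pos (hiff.mpr h), if_pos h]
            show pathWeight (wfun l) (Fin.snoc p false) = _
            rw [pathWeight_snoc, h.1, wfun_false]
          · rw [if_neg (fun hc => h (hiff.mp hc)), if_neg h, zero_mul]
    rw [Finset.sum_congr rfl (fun p _ => hsum p), Finset.sum_add_distrib,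
      ← Finset.sum_mul, ← Finset.sum_mul, ih (M-1), ih (M+1)]
    rw [show wcoefB l (M+1) = (if (M+1 = 0 ∨ M+1 = (l:ℤ)-1 ∨ M+1 = 2*(l:ℤ)-1) then 0
               else if M+1 = (l:ℤ) ∨ M+1 = 2*(l:ℤ) then 2 else 1) from rfl]
    ring


open Classical in
lemma finsum_mem_eq_if_sum {α : Type*} [Fintype α] (f : α → ℤ) (S : Set α) :
    (∑ᶠ s ∈ S, f s) = ∑ s : α, if s ∈ S then f s else 0 := by
  classical
  rw [finsum_mem_eq_sum f (Set.toFinite _), ← Finset.sum_filter]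
  apply Finset.sum_subset
  · intro x hx
    simp only [Set.Finite.mem_toFinset, Set.mem_inter_iff] at hx
    simp only [Finset.mem_filter, Finset.mem_univ, true_and]
    exact hx.1
  · intro x hx hnx
    simp only [Finset.mem_filter, Finset.mem_univ, true_and] at hx
    by_contra hne
    exact hnx (by
      simp only [Set.Finite.mem_toFinset, Set.mem_inter_iff, Function.mem_support]
      exact ⟨hx, hne⟩)

/-- For `l ≥ 2` and `l-1 ≤ M < 2l-1`, the weighted number of lattice paths from `(0,0)` to
`(M,N)` with a left wall at `x = 0`, a type-1 filter at `x = l-1`, and a type-2 filter at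
`x = 2l-1` equals `Σ_{k=0}^{⌊(N-l+1)/(4l)⌋} F (M+4kl) N + Σ_{k=0}^{⌊(N-2l)/(4l)⌋} F (M-4kl-4l) N`. -/
theorem wall_two_filters_weighted_count (l M N : ℕ) (hl : 2 ≤ l)
    (hM1 : l - 1 ≤ M) (hM2 : M < 2 * l - 1) (h2 : N % 2 = M % 2) :
    (∑ᶠ s ∈ {s : Fin N → Bool |
        pathPos s N = M ∧
        (∀ i : Fin N, pathPos s i.val = 0 → s i = true) ∧
        (∀ i : Fin N, pathPos s i.val = (l : ℤ) - 1 → s i = true) ∧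
        (∀ i : Fin N, pathPos s i.val = 2 * (l : ℤ) - 1 → s i = true)},
      pathWeight (fun x b =>
        if (x = (l : ℤ) ∧ b = false) ∨ (x = 2 * (l : ℤ) - 1 ∧ b = true) ∨
            (x = 2 * (l : ℤ) ∧ b = false) then 2 else 1) s) =
      (∑ k ∈ Finset.Icc (0 : ℤ) (Int.fdiv ((N : ℤ) - l + 1) (4 * l)),
        F ((M : ℤ) + 4 * k * l) N) +
      ∑ k ∈ Finset.Icc (0 : ℤ) (Int.fdiv ((N : ℤ) - 2 * l) (4 * l)),
        F ((M : ℤ) - 4 * k * l - 4 * l) N := by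
  classical
  have key1 : (∑ᶠ s ∈ {s : Fin N → Bool | Cond l (M:ℤ) s}, pathWeight (wfun l) s)
      = cnt l N M := by
    rw [finsum_mem_eq_if_sum (pathWeight (wfun l)) {s : Fin N → Bool | Cond l (M:ℤ) s}]
    rw [← count_eq l N (M:ℤ)]
    apply Finset.sum_congr rfl
    intro s _
    by_cases h : Cond l (M:ℤ) s
    · rw [if_pos h, if_pos (by exact h)]
    · rw [if_neg h, if_neg (by exact h)]
  have key2 := (cnt_eq_SS l hl N (M:ℤ)).2 (by omega) (by omega) (by omega)
  have key3 := SS_trunc l hl M N (by omega) (by omega) (by omega)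
  calc (∑ᶠ s ∈ {s : Fin N → Bool |
        pathPos s N = M ∧
        (∀ i : Fin N, pathPos s i.val = 0 → s i = true) ∧
        (∀ i : Fin N, pathPos s i.val = (l : ℤ) - 1 → s i = true) ∧
        (∀ i : Fin N, pathPos s i.val = 2 * (l : ℤ) - 1 → s i = true)},
      pathWeight (fun x b =>
        if (x = (l : ℤ) ∧ b = false) ∨ (x = 2 * (l : ℤ) - 1 ∧ b = true) ∨
            (x = 2 * (l : ℤ) ∧ b = false) then 2 else 1) s)
      = (∑ᶠ s ∈ {s : Fin N → Bool | Cond l (M:ℤ) s}, pathWeight (wfun l) s) := rfl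
    _ = cnt l N M := key1
    _ = SS (4*l) (M:ℤ) N := key2
    _ = _ := key3
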